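/- arXiv:0903.5269 — 2 statements merged into one kernel-verified Lean document; each statement's English description precedes it below -/
import Mathlib

section
/- Let R ∈ 𝔣(V,g) be such that R* ∈ 𝔣(V,g) as well (i.e., R, R* ∈ 𝔯(V) and both Ric(R), Ric(R*) are symmetric). Then, with Ric := Ric(R), Ric* := Ric*(R), τ := τ(R): (1) π₁(R) = (−τ/(n(n−1))) g∧g = π₁(R*); (2) π₂(R) = (1/(n−1))[(τ/n)g − Ric]∧g; (3) π₃(R) = 0 = π₃(R*); (4) π₄(R) = 0 = π₄(R*); (5) π₅(R) = (1/((n−1)(n−2)))[τ g∧g − (1/n)(Ric + (n−1)Ric*)∧_{n−1}g]; (6) π₆(R) = ψ(R) + (1/(2(n−2)))(Ric + Ric*)∧₁g − (τ/((n−1)(n−2))) g∧g = π₆(R*); (7) π₇(R) = μ(R) + (1/(2n))(Ric − Ric*)∧_{−1}g = −π₇(R*); (8) π₈(R) = 0 = π₈(R*). -/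
open scoped BigOperators
open Pointwise

namespace GCT

variable {V : Type*} [AddCommGroup V] [Module ℝ V]

/-- Linearity of a real valued function of one vector variable. -/
def IsLin (f : V → ℝ) : Prop :=
  (∀ x y : V, f (x + y) = f x + f y) ∧ (∀ (c : ℝ) (x : V), f (c • x) = c * f x)

/-- Bilinearity. -/
def IsBilin (h : V → V → ℝ) : Prop :=
  (∀ y, IsLin (fun x => h x y)) ∧ (∀ x, IsLin (fun y => h x y))

/-- 4-linearity. -/
def IsMulti4 (F : V → V → V → V → ℝ) : Prop :=
  (∀ y z w, IsLin (fun x => F x y z w)) ∧ (∀ x z w, IsLin (fun y => F x y z w)) ∧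
    (∀ x y w, IsLin (fun z => F x y z w)) ∧ (∀ x y z, IsLin (fun w => F x y z w))

/-- The space 𝔯(V) of generalized curvature tensors. -/
def rSet (V : Type*) [AddCommGroup V] [Module ℝ V] : Set (V → V → V → V → ℝ) :=
  {F | IsMulti4 F ∧ (∀ x y z w, F x y z w = - F y x z w) ∧
    (∀ x y z w, F x y z w + F y z x w + F z x y w = 0)}

/-- The space 𝔞(V) of algebraic curvature tensors. -/
def aSet (V : Type*) [AddCommGroup V] [Module ℝ V] : Set (V → V → V → V → ℝ) :=
  {F | F ∈ rSet V ∧ ∀ x y z w, F x y z w = - F x y w z}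

/-- The space 𝔰(V). -/
def sSet (V : Type*) [AddCommGroup V] [Module ℝ V] : Set (V → V → V → V → ℝ) :=
  {F | F ∈ rSet V ∧ ∀ x y z w, F x y z w = F x y w z}

/-- The conjugate tensor R*. -/
def conj (F : V → V → V → V → ℝ) : V → V → V → V → ℝ := fun x y z w => - F x y w z

/-- The product h·k of two bilinear forms. -/
def prodB (h k : V → V → ℝ) : V → V → V → V → ℝ := fun x y z w => h x y * k z w

/-- The wedge product h ∧_t k of two bilinear forms. -/
def wedge (t : ℝ) (h k : V → V → ℝ) : V → V → V → V → ℝ :=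
  fun x y z w => h x z * k y w - h y z * k x w - t * (h x w * k y z - h y w * k x z)

/-- Antisymmetric part Λh. -/
noncomputable def lamB (h : V → V → ℝ) : V → V → ℝ := fun x y => (h x y - h y x) / 2

/-- Symmetric part Sh. -/
noncomputable def symB (h : V → V → ℝ) : V → V → ℝ := fun x y => (h x y + h y x) / 2

/-- The idempotent ψ. -/
noncomputable def psi (F : V → V → V → V → ℝ) : V → V → V → V → ℝ :=
  fun x y z w => (F x y z w + F y x w z + F z w x y + F w z y x) / 4

/-- The idempotent μ. -/
noncomputable def mu (F : V → V → V → V → ℝ) : V → V → V → V → ℝ :=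
  fun x y z w =>
    (3 * F x y z w + 3 * F x y w z + F x w z y + F x z w y + F w y z x + F z y w x) / 8

/-- A linear equivalence is a g-isometry. -/
def IsIsometry (g : V → V → ℝ) (φ : V ≃ₗ[ℝ] V) : Prop := ∀ x y, g (φ x) (φ y) = g x y

/-- Pull back of a 4-tensor along a linear equivalence (the natural action). -/
def pullT (φ : V ≃ₗ[ℝ] V) (F : V → V → V → V → ℝ) : V → V → V → V → ℝ :=
  fun x y z w => F (φ x) (φ y) (φ z) (φ w)

/-- Invariance of a set of 4-tensors under the orthogonal group O(V,g). -/
def OInv (g : V → V → ℝ) (S : Set (V → V → V → V → ℝ)) : Prop :=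
  ∀ φ : V ≃ₗ[ℝ] V, IsIsometry g φ → ∀ F ∈ S, pullT φ F ∈ S

/-- Irreducibility of a subspace of 4-tensors as an O(V,g)-module:
there is no proper nonzero invariant subspace. -/
def OIrred (g : V → V → ℝ) (W : Set (V → V → V → V → ℝ)) : Prop :=
  ∀ U : Submodule ℝ (V → V → V → V → ℝ), (U : Set (V → V → V → V → ℝ)) ⊆ W →
    (∀ φ : V ≃ₗ[ℝ] V, IsIsometry g φ → ∀ F ∈ U, pullT φ F ∈ U) →
    (U : Set (V → V → V → V → ℝ)) = {0} ∨ (U : Set (V → V → V → V → ℝ)) = W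

/-- Isomorphism of two invariant subspaces as O(V,g)-modules. -/
def OEquivMod (g : V → V → ℝ) (S T : Set (V → V → V → V → ℝ)) : Prop :=
  ∃ e : (V → V → V → V → ℝ) →ₗ[ℝ] (V → V → V → V → ℝ),
    Set.BijOn e S T ∧
      ∀ φ : V ≃ₗ[ℝ] V, IsIsometry g φ → ∀ F ∈ S, e (pullT φ F) = pullT φ (e F)

variable (n : ℕ) (b : Module.Basis (Fin n) ℝ V) (g : V → V → ℝ)

/-- Inverse metric components g^{ij}. -/
noncomputable def ginv : Matrix (Fin n) (Fin n) ℝ :=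
  (Matrix.of fun i j => g (b i) (b j))⁻¹

/-- Ric(R)(x,y) := Σ g^{ij} R(e_i,x,y,e_j). -/
noncomputable def Ric (F : V → V → V → V → ℝ) : V → V → ℝ :=
  fun x y => ∑ i, ∑ j, ginv n b g i j * F (b i) x y (b j)

/-- Ric*(R)(x,y) := Σ g^{ij} R(x,e_i,e_j,y). -/
noncomputable def RicS (F : V → V → V → V → ℝ) : V → V → ℝ :=
  fun x y => ∑ i, ∑ j, ginv n b g i j * F x (b i) (b j) y

/-- The generalized scalar curvature τ(R). -/
noncomputable def tau (F : V → V → V → V → ℝ) : ℝ :=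
  ∑ i, ∑ j, ∑ k, ∑ l, ginv n b g i l * ginv n b g j k * F (b i) (b j) (b k) (b l)

/-- The g-trace of a bilinear form. -/
noncomputable def trg (h : V → V → ℝ) : ℝ := ∑ i, ∑ j, ginv n b g i j * h (b i) (b j)

/-- The scalar product on 4-tensors given by full contraction with g. -/
noncomputable def inner4 (F T : V → V → V → V → ℝ) : ℝ :=
  ∑ i, ∑ j, ∑ k, ∑ l, ∑ i', ∑ j', ∑ k', ∑ l',
    ginv n b g i i' * ginv n b g j j' * ginv n b g k k' * ginv n b g l l' *
      F (b i) (b j) (b k) (b l) * T (b i') (b j') (b k') (b l')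

/-- W-projection π₁. -/
noncomputable def pi1 (F : V → V → V → V → ℝ) : V → V → V → V → ℝ :=
  (-(tau n b g F) / ((n : ℝ) * ((n : ℝ) - 1))) • wedge 0 g g

/-- W-projection π₂. -/
noncomputable def pi2 (F : V → V → V → V → ℝ) : V → V → V → V → ℝ :=
  ((1 : ℝ) / ((n : ℝ) - 1)) • wedge 0 (((tau n b g F) / (n : ℝ)) • g - symB (Ric n b g F)) g

/-- W-projection π₃. -/
noncomputable def pi3 (F : V → V → V → V → ℝ) : V → V → V → V → ℝ :=
  ((-1 : ℝ) / ((n : ℝ) + 1)) •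
    ((2 : ℝ) • prodB (lamB (Ric n b g F)) g + wedge 0 (lamB (Ric n b g F)) g)

/-- W-projection π₄. -/
noncomputable def pi4 (F : V → V → V → V → ℝ) : V → V → V → V → ℝ :=
  ((-1 : ℝ) / ((n : ℝ) ^ 2 - 4)) •
      ((2 : ℝ) • prodB (lamB (RicS n b g F)) g + wedge ((n : ℝ) + 1) (lamB (RicS n b g F)) g)
    - ((3 : ℝ) / (((n : ℝ) ^ 2 - 4) * ((n : ℝ) + 1))) •
      ((2 : ℝ) • prodB (lamB (Ric n b g F)) g + wedge ((n : ℝ) + 1) (lamB (Ric n b g F)) g)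

/-- W-projection π₅. -/
noncomputable def pi5 (F : V → V → V → V → ℝ) : V → V → V → V → ℝ :=
  ((1 : ℝ) / (((n : ℝ) - 1) * ((n : ℝ) - 2))) •
    ((tau n b g F) • wedge 0 g g -
      ((1 : ℝ) / (n : ℝ)) •
        wedge ((n : ℝ) - 1) (symB (Ric n b g F + ((n : ℝ) - 1) • RicS n b g F)) g)

/-- W-projection π₆. -/
noncomputable def pi6 (F : V → V → V → V → ℝ) : V → V → V → V → ℝ :=
  psi F + ((1 : ℝ) / (2 * ((n : ℝ) - 2))) • wedge 1 (symB (Ric n b g F + RicS n b g F)) g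
    - ((tau n b g F) / (((n : ℝ) - 1) * ((n : ℝ) - 2))) • wedge 0 g g

/-- W-projection π₇. -/
noncomputable def pi7 (F : V → V → V → V → ℝ) : V → V → V → V → ℝ :=
  mu F + ((1 : ℝ) / (2 * (n : ℝ))) • wedge (-1) (symB (Ric n b g F - RicS n b g F)) g
    + ((1 : ℝ) / (2 * ((n : ℝ) + 2))) • prodB (lamB ((3 : ℝ) • Ric n b g F - RicS n b g F)) g
    + ((1 : ℝ) / (4 * ((n : ℝ) + 2))) • wedge (-1) (lamB ((3 : ℝ) • Ric n b g F - RicS n b g F)) g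

/-- W-projection π₈. -/
noncomputable def pi8 (F : V → V → V → V → ℝ) : V → V → V → V → ℝ :=
  F - psi F - mu F
    + ((1 : ℝ) / (2 * ((n : ℝ) - 2))) • prodB (lamB (Ric n b g F + RicS n b g F)) g
    + ((1 : ℝ) / (4 * ((n : ℝ) - 2))) • wedge 3 (lamB (Ric n b g F + RicS n b g F)) g

/-- A-projection α₁. -/
noncomputable def al1 (F : V → V → V → V → ℝ) : V → V → V → V → ℝ :=
  (-(tau n b g F) / ((n : ℝ) * ((n : ℝ) - 1))) • wedge 0 g g

/-- A-projection α₂. -/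
noncomputable def al2 (F : V → V → V → V → ℝ) : V → V → V → V → ℝ :=
  ((-1 : ℝ) / (2 * ((n : ℝ) - 2))) • wedge 1 (symB (Ric n b g F + RicS n b g F)) g
    + ((2 * tau n b g F) / ((n : ℝ) * ((n : ℝ) - 2))) • wedge 0 g g

/-- A-projection α₃. -/
noncomputable def al3 (F : V → V → V → V → ℝ) : V → V → V → V → ℝ :=
  ((-1 : ℝ) / (2 * (n : ℝ))) • wedge (-1) (symB (Ric n b g F - RicS n b g F)) g

/-- A-projection α₄. -/
noncomputable def al4 (F : V → V → V → V → ℝ) : V → V → V → V → ℝ :=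
  ((-1 : ℝ) / (4 * ((n : ℝ) + 2))) •
    ((2 : ℝ) • prodB (lamB ((3 : ℝ) • Ric n b g F - RicS n b g F)) g
      + wedge (-1) (lamB ((3 : ℝ) • Ric n b g F - RicS n b g F)) g)

/-- A-projection α₅. -/
noncomputable def al5 (F : V → V → V → V → ℝ) : V → V → V → V → ℝ :=
  ((-1 : ℝ) / (4 * ((n : ℝ) - 2))) •
    ((2 : ℝ) • prodB (lamB (Ric n b g F + RicS n b g F)) g
      + wedge 3 (lamB (Ric n b g F + RicS n b g F)) g)

/-- A-projection α₆. -/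
noncomputable def al6 (F : V → V → V → V → ℝ) : V → V → V → V → ℝ :=
  psi F - al1 n b g F - al2 n b g F

/-- A-projection α₇. -/
noncomputable def al7 (F : V → V → V → V → ℝ) : V → V → V → V → ℝ :=
  mu F - al3 n b g F - al4 n b g F

/-- A-projection α₈. -/
noncomputable def al8 (F : V → V → V → V → ℝ) : V → V → V → V → ℝ :=
  F - mu F - psi F - al5 n b g F

/-- Curvature tensors of constant curvature type. -/
noncomputable def uSet : Set (V → V → V → V → ℝ) :=
  {F | ∃ c : ℝ, ∀ x y z w, F x y z w = c * (g x w * g y z - g x z * g y w)}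

/-- Ricci traceless algebraic curvature tensors built from a traceless symmetric form. -/
noncomputable def zSet : Set (V → V → V → V → ℝ) :=
  {F | ∃ Xi : V → V → ℝ, IsBilin Xi ∧ (∀ x y, Xi x y = Xi y x) ∧ trg n b g Xi = 0 ∧
    ∀ x y z w, F x y z w = Xi x w * g y z + g x w * Xi y z - Xi x z * g y w - g x z * Xi y w}

/-- Weyl type (Ricci flat algebraic) curvature tensors. -/
noncomputable def wSet : Set (V → V → V → V → ℝ) :=
  {F | F ∈ aSet V ∧ Ric n b g F = fun _ _ => 0}

/-- The projective curvature tensor p(R). -/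
noncomputable def pProj (F : V → V → V → V → ℝ) : V → V → V → V → ℝ :=
  F - pi1 n b g F - pi2 n b g F - pi3 n b g F

/-!
All eight identities are pointwise algebra. Antisymmetry of `R`
in its first two slots gives `Ric(R*) = Ric*(R)`, `Ric*(R*) = Ric(R)` and, after relabelling the
summation indices, `τ(R*) = τ(R)`. The first Bianchi identities of `R` and of `R*` give
`ψ(R*) = ψ(R)`, `μ(R*) = -μ(R)` and `R = ψ(R) + μ(R)`. Symmetry of `Ric` and `Ric*` makes every
`Λ`-term vanish and every `S`-term the identity, and the formulas are then read off.
-/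

set_option linter.unusedSectionVars false

def IsSymmForm (h : V → V → ℝ) : Prop := ∀ x y, h x y = h y x

namespace IsSymmForm

variable {h k : V → V → ℝ}

theorem add (hh : IsSymmForm h) (hk : IsSymmForm k) : IsSymmForm (h + k) := fun x y => by
  simp only [Pi.add_apply, hh x y, hk x y]

theorem sub (hh : IsSymmForm h) (hk : IsSymmForm k) : IsSymmForm (h - k) := fun x y => by
  simp only [Pi.sub_apply, hh x y, hk x y]

theorem smul (hh : IsSymmForm h) (c : ℝ) : IsSymmForm (c • h) := fun x y => by
  simp only [Pi.smul_apply, hh x y]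

theorem symB_eq (hh : IsSymmForm h) : symB h = h := by
  funext x y
  simp only [symB, hh y x, add_self_div_two]

theorem lamB_eq_zero (hh : IsSymmForm h) : lamB h = 0 := by
  funext x y
  simp only [lamB, hh y x, sub_self, zero_div, Pi.zero_apply]

end IsSymmForm

theorem prodB_zero_left (k : V → V → ℝ) : prodB 0 k = 0 := by
  funext x y z w
  simp [prodB]

theorem wedge_zero_left (t : ℝ) (k : V → V → ℝ) : wedge t 0 k = 0 := by
  funext x y z w
  simp [wedge]

theorem wedge_neg_left (t : ℝ) (h k : V → V → ℝ) : wedge t (-h) k = -wedge t h k := by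
  funext x y z w
  simp only [wedge, Pi.neg_apply]
  ring

theorem conj_conj (F : V → V → V → V → ℝ) : conj (conj F) = F := by
  funext x y z w
  simp [conj]

section Conjugate

variable {n b g} {F : V → V → V → V → ℝ}

theorem bianchi_of_conj_mem_rSet (hFc : conj F ∈ rSet V) (x y z w : V) :
    F x y w z + F y z w x + F z x w y = 0 := by
  have h := hFc.2.2 x y z w
  simp only [conj] at h
  linarith

theorem Ric_conj (hF : F ∈ rSet V) : Ric n b g (conj F) = RicS n b g F := by
  funext x y
  simp only [Ric, RicS, conj, hF.2.1 _ x, neg_neg]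

theorem RicS_conj (hF : F ∈ rSet V) : RicS n b g (conj F) = Ric n b g F := by
  funext x y
  simp only [Ric, RicS, conj, hF.2.1 x, neg_neg]

theorem tau_conj (hF : F ∈ rSet V) : tau n b g (conj F) = tau n b g F := by
  simp only [tau, conj, ← hF.2.1]
  rw [Finset.sum_comm]
  refine Finset.sum_congr rfl fun _ _ => Finset.sum_congr rfl fun _ _ => ?_
  rw [Finset.sum_comm]
  exact Finset.sum_congr rfl fun _ _ => Finset.sum_congr rfl fun _ _ => by ring

-- The coefficients in the next three `linear_combination`s solve a linear system over the
-- values of `F` at the 24 permutations of `(x, y, z, w)`.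
theorem psi_conj (hF : F ∈ rSet V) (hFc : conj F ∈ rSet V) : psi (conj F) = psi F := by
  have hA := hF.2.1
  have hBc := bianchi_of_conj_mem_rSet hFc
  funext x y z w
  simp only [psi, conj]
  linear_combination (-1/4 : ℝ) * hA x y z w + (-1/4 : ℝ) * hA x y w z
    + (1/4 : ℝ) * hA x z y w + (1/4 : ℝ) * hA x z w y + (-1/4 : ℝ) * hF.2.2 x z w y
    + (-1/4 : ℝ) * hBc x z w y + (1/4 : ℝ) * hA x w y z + (1/4 : ℝ) * hA x w z y
    + (-1/4 : ℝ) * hF.2.2 x w z y + (-1/4 : ℝ) * hBc x w z y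

theorem mu_conj (hF : F ∈ rSet V) (hFc : conj F ∈ rSet V) : mu (conj F) = -mu F := by
  have hB := hF.2.2
  have hBc := bianchi_of_conj_mem_rSet hFc
  funext x y z w
  simp only [mu, conj, Pi.neg_apply]
  linear_combination (-1/8 : ℝ) * hB x z y w + (1/8 : ℝ) * hBc x z y w
    + (-1/8 : ℝ) * hB x w y z + (1/8 : ℝ) * hBc x w y z

theorem psi_add_mu (hF : F ∈ rSet V) (hFc : conj F ∈ rSet V) : psi F + mu F = F := by
  have hA := hF.2.1
  have hBc := bianchi_of_conj_mem_rSet hFc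
  funext x y z w
  simp only [psi, mu, Pi.add_apply]
  linear_combination (-3/8 : ℝ) * hA x y z w + (2/8 : ℝ) * hBc x y z w
    + (1/8 : ℝ) * hA x y w z + (-2/8 : ℝ) * hA x z y w + (1/8 : ℝ) * hBc x z y w
    + (-2/8 : ℝ) * hA x z w y + (2/8 : ℝ) * hF.2.2 x z w y + (2/8 : ℝ) * hBc x z w y
    + (-2/8 : ℝ) * hA x w y z + (3/8 : ℝ) * hBc x w y z + (-2/8 : ℝ) * hA x w z y
    + (2/8 : ℝ) * hBc x w z y + (-2/8 : ℝ) * hF.2.2 y z w x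

theorem pi1_conj (hF : F ∈ rSet V) : pi1 n b g (conj F) = pi1 n b g F := by
  rw [pi1, pi1, tau_conj hF]

theorem pi6_conj (hF : F ∈ rSet V) (hFc : conj F ∈ rSet V) :
    pi6 n b g (conj F) = pi6 n b g F := by
  rw [pi6, pi6, psi_conj hF hFc, Ric_conj hF, RicS_conj hF, add_comm (RicS n b g F), tau_conj hF]

end Conjugate

section SymmetricRicci

variable {n b g} {F : V → V → V → V → ℝ}

theorem pi2_of_isSymmForm (hRic : IsSymmForm (Ric n b g F)) :
    pi2 n b g F =
      ((1 : ℝ) / ((n : ℝ) - 1)) • wedge 0 (((tau n b g F) / (n : ℝ)) • g - Ric n b g F) g := by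
  rw [pi2, hRic.symB_eq]

theorem pi3_eq_zero (hRic : IsSymmForm (Ric n b g F)) : pi3 n b g F = 0 := by
  simp [pi3, hRic.lamB_eq_zero, prodB_zero_left, wedge_zero_left]

theorem pi4_eq_zero (hRic : IsSymmForm (Ric n b g F)) (hRicS : IsSymmForm (RicS n b g F)) :
    pi4 n b g F = 0 := by
  simp [pi4, hRic.lamB_eq_zero, hRicS.lamB_eq_zero, prodB_zero_left, wedge_zero_left]

theorem pi5_of_isSymmForm (hRic : IsSymmForm (Ric n b g F))
    (hRicS : IsSymmForm (RicS n b g F)) :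
    pi5 n b g F = ((1 : ℝ) / (((n : ℝ) - 1) * ((n : ℝ) - 2))) •
      ((tau n b g F) • wedge 0 g g -
        ((1 : ℝ) / (n : ℝ)) •
          wedge ((n : ℝ) - 1) (Ric n b g F + ((n : ℝ) - 1) • RicS n b g F) g) := by
  rw [pi5, (hRic.add (hRicS.smul _)).symB_eq]

theorem pi6_of_isSymmForm (hRic : IsSymmForm (Ric n b g F))
    (hRicS : IsSymmForm (RicS n b g F)) :
    pi6 n b g F = psi F
      + ((1 : ℝ) / (2 * ((n : ℝ) - 2))) • wedge 1 (Ric n b g F + RicS n b g F) g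
      - ((tau n b g F) / (((n : ℝ) - 1) * ((n : ℝ) - 2))) • wedge 0 g g := by
  rw [pi6, (hRic.add hRicS).symB_eq]

theorem pi7_of_isSymmForm (hRic : IsSymmForm (Ric n b g F))
    (hRicS : IsSymmForm (RicS n b g F)) :
    pi7 n b g F = mu F
      + ((1 : ℝ) / (2 * (n : ℝ))) • wedge (-1) (Ric n b g F - RicS n b g F) g := by
  simp [pi7, (hRic.sub hRicS).symB_eq, ((hRic.smul 3).sub hRicS).lamB_eq_zero,
    prodB_zero_left, wedge_zero_left]

theorem pi7_conj (hF : F ∈ rSet V) (hFc : conj F ∈ rSet V) (hRic : IsSymmForm (Ric n b g F))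
    (hRicS : IsSymmForm (RicS n b g F)) : pi7 n b g (conj F) = -pi7 n b g F := by
  have hRicc : IsSymmForm (Ric n b g (conj F)) := Ric_conj hF ▸ hRicS
  have hRicSc : IsSymmForm (RicS n b g (conj F)) := RicS_conj hF ▸ hRic
  rw [pi7_of_isSymmForm hRic hRicS, pi7_of_isSymmForm hRicc hRicSc, mu_conj hF hFc,
    Ric_conj hF, RicS_conj hF, ← neg_sub, wedge_neg_left, smul_neg, neg_add]

theorem pi8_eq_zero (hF : F ∈ rSet V) (hFc : conj F ∈ rSet V)
    (hRic : IsSymmForm (Ric n b g F)) (hRicS : IsSymmForm (RicS n b g F)) :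
    pi8 n b g F = 0 := by
  rw [pi8, (hRic.add hRicS).lamB_eq_zero, prodB_zero_left, wedge_zero_left, smul_zero,
    smul_zero, add_zero, add_zero, sub_sub, psi_add_mu hF hFc, sub_self]

end SymmetricRicci

theorem stmt6_general {V : Type*} [AddCommGroup V] [Module ℝ V]
    (n : ℕ) (b : Module.Basis (Fin n) ℝ V)
    (g : V → V → ℝ) :
    ∀ F ∈ rSet V, conj F ∈ rSet V →
      (∀ x y, Ric n b g F x y = Ric n b g F y x) →
      (∀ x y, Ric n b g (conj F) x y = Ric n b g (conj F) y x) →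
      (pi1 n b g F = (-(tau n b g F) / ((n : ℝ) * ((n : ℝ) - 1))) • wedge 0 g g ∧
        pi1 n b g F = pi1 n b g (conj F)) ∧
      pi2 n b g F =
        ((1 : ℝ) / ((n : ℝ) - 1)) • wedge 0 (((tau n b g F) / (n : ℝ)) • g - Ric n b g F) g ∧
      (pi3 n b g F = 0 ∧ pi3 n b g (conj F) = 0) ∧
      (pi4 n b g F = 0 ∧ pi4 n b g (conj F) = 0) ∧
      pi5 n b g F = ((1 : ℝ) / (((n : ℝ) - 1) * ((n : ℝ) - 2))) •
        ((tau n b g F) • wedge 0 g g -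
          ((1 : ℝ) / (n : ℝ)) •
            wedge ((n : ℝ) - 1) (Ric n b g F + ((n : ℝ) - 1) • RicS n b g F) g) ∧
      (pi6 n b g F = psi F
          + ((1 : ℝ) / (2 * ((n : ℝ) - 2))) • wedge 1 (Ric n b g F + RicS n b g F) g
          - ((tau n b g F) / (((n : ℝ) - 1) * ((n : ℝ) - 2))) • wedge 0 g g ∧
        pi6 n b g F = pi6 n b g (conj F)) ∧
      (pi7 n b g F = mu F
          + ((1 : ℝ) / (2 * (n : ℝ))) • wedge (-1) (Ric n b g F - RicS n b g F) g ∧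
        pi7 n b g F = - pi7 n b g (conj F)) ∧
      (pi8 n b g F = 0 ∧ pi8 n b g (conj F) = 0) := by
  intro F hF hFc hRic hRicc
  have hRicS : IsSymmForm (RicS n b g F) := Ric_conj hF ▸ hRicc
  have hRicSc : IsSymmForm (RicS n b g (conj F)) := RicS_conj hF ▸ hRic
  have hFcc : conj (conj F) ∈ rSet V := (conj_conj F).symm ▸ hF
  refine ⟨⟨rfl, (pi1_conj hF).symm⟩, pi2_of_isSymmForm hRic,
    ⟨pi3_eq_zero hRic, pi3_eq_zero hRicc⟩, ⟨pi4_eq_zero hRic hRicS, pi4_eq_zero hRicc hRicSc⟩,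
    pi5_of_isSymmForm hRic hRicS, ⟨pi6_of_isSymmForm hRic hRicS, (pi6_conj hF hFc).symm⟩,
    ⟨pi7_of_isSymmForm hRic hRicS, by rw [pi7_conj hF hFc hRic hRicS, neg_neg]⟩,
    ⟨pi8_eq_zero hF hFc hRic hRicS, pi8_eq_zero hFc hFcc hRicc hRicSc⟩⟩

theorem stmt6 {V : Type*} [AddCommGroup V] [Module ℝ V]
    (n : ℕ) (hn : 3 ≤ n) (b : Module.Basis (Fin n) ℝ V)
    (g : V → V → ℝ) (hgb : IsBilin g) (hgs : ∀ x y, g x y = g y x)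
    (hgnd : ∀ x : V, (∀ y : V, g x y = 0) → x = 0) :
    ∀ F ∈ rSet V, conj F ∈ rSet V →
      (∀ x y, Ric n b g F x y = Ric n b g F y x) →
      (∀ x y, Ric n b g (conj F) x y = Ric n b g (conj F) y x) →
      (pi1 n b g F = (-(tau n b g F) / ((n : ℝ) * ((n : ℝ) - 1))) • wedge 0 g g ∧
        pi1 n b g F = pi1 n b g (conj F)) ∧
      pi2 n b g F =
        ((1 : ℝ) / ((n : ℝ) - 1)) • wedge 0 (((tau n b g F) / (n : ℝ)) • g - Ric n b g F) g ∧
      (pi3 n b g F = 0 ∧ pi3 n b g (conj F) = 0) ∧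
      (pi4 n b g F = 0 ∧ pi4 n b g (conj F) = 0) ∧
      pi5 n b g F = ((1 : ℝ) / (((n : ℝ) - 1) * ((n : ℝ) - 2))) •
        ((tau n b g F) • wedge 0 g g -
          ((1 : ℝ) / (n : ℝ)) •
            wedge ((n : ℝ) - 1) (Ric n b g F + ((n : ℝ) - 1) • RicS n b g F) g) ∧
      (pi6 n b g F = psi F
          + ((1 : ℝ) / (2 * ((n : ℝ) - 2))) • wedge 1 (Ric n b g F + RicS n b g F) g
          - ((tau n b g F) / (((n : ℝ) - 1) * ((n : ℝ) - 2))) • wedge 0 g g ∧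
        pi6 n b g F = pi6 n b g (conj F)) ∧
      (pi7 n b g F = mu F
          + ((1 : ℝ) / (2 * (n : ℝ))) • wedge (-1) (Ric n b g F - RicS n b g F) g ∧
        pi7 n b g F = - pi7 n b g (conj F)) ∧
      (pi8 n b g F = 0 ∧ pi8 n b g (conj F) = 0) :=
  stmt6_general n b g

end GCT
end

section
/- For every R ∈ 𝔯(V), writing Ric := Ric(R) and τ := τ(R): (1) Ric(π₁(R)) = (τ/n) g; (2) Ric(π₂(R)) = −(τ/n) g + S Ric; (3) Ric(π₃(R)) = Λ Ric; (4) Ric(π_j(R)) = 0 for j = 4, 5, 6, 7, 8; (5) the g-trace of Ric(π_j(R)) vanishes for j = 2, …, 8. -/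
open scoped BigOperators
open Pointwise

namespace GCT

variable {V : Type*} [AddCommGroup V] [Module ℝ V]

variable (n : ℕ) (b : Module.Basis (Fin n) ℝ V) (g : V → V → ℝ)

/-! Every W-projection is a linear combination of R, ψ(R), μ(R) and of products `h·g`,
`h ∧_t g` with `h` built from g, Ric and Ric*. Since Ric is linear, it suffices to know Ric on
these building blocks. Contracting against `g^{ij}` reproduces a linear form,
`Σ g^{ij} g(x, e_i) f(e_j) = f(x)`, which gives `Ric(h ∧_t g) = (1 + t - n) h - t tr_g(h) g` and
`Ric(h·g)(x, y) = h(y, x)`; antisymmetry and the first Bianchi identity express the contraction of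
R over any two slots through Ric and Ric*, which gives Ric(ψ R) and Ric(μ R). What remains are
identities between rational functions of n. -/

section Linearity

variable {V : Type*} [AddCommGroup V] [Module ℝ V]

lemma IsLin.add {f f' : V → ℝ} (hf : IsLin f) (hf' : IsLin f') : IsLin (fun x => f x + f' x) :=
  ⟨fun x y => by simp only [hf.1, hf'.1]; ring, fun c x => by simp only [hf.2, hf'.2]; ring⟩

lemma IsLin.sub {f f' : V → ℝ} (hf : IsLin f) (hf' : IsLin f') : IsLin (fun x => f x - f' x) :=
  ⟨fun x y => by simp only [hf.1, hf'.1]; ring, fun c x => by simp only [hf.2, hf'.2]; ring⟩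

lemma IsLin.const_mul (a : ℝ) {f : V → ℝ} (hf : IsLin f) : IsLin (fun x => a * f x) :=
  ⟨fun x y => by simp only [hf.1]; ring, fun c x => by simp only [hf.2]; ring⟩

lemma IsLin.div_const {f : V → ℝ} (hf : IsLin f) (a : ℝ) : IsLin (fun x => f x / a) :=
  ⟨fun x y => by simp only [hf.1]; ring, fun c x => by simp only [hf.2]; ring⟩

lemma IsLin.map_sum_smul {f : V → ℝ} (hf : IsLin f) {ι : Type*} (s : Finset ι) (c : ι → ℝ)
    (v : ι → V) : f (∑ k ∈ s, c k • v k) = ∑ k ∈ s, c k * f (v k) := by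
  let L : V →ₗ[ℝ] ℝ := ⟨⟨f, hf.1⟩, hf.2⟩
  calc f (∑ k ∈ s, c k • v k) = L (∑ k ∈ s, c k • v k) := rfl
    _ = ∑ k ∈ s, c k * f (v k) := by simp [L]

lemma isLin_sum {ι : Type*} (s : Finset ι) {f : ι → V → ℝ} (hf : ∀ i, IsLin (f i)) :
    IsLin (fun x => ∑ i ∈ s, f i x) :=
  ⟨fun x y => by simp only [(hf _).1, Finset.sum_add_distrib],
    fun c x => by simp only [(hf _).2, Finset.mul_sum]⟩

lemma IsBilin.add {h k : V → V → ℝ} (hh : IsBilin h) (hk : IsBilin k) : IsBilin (h + k) :=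
  ⟨fun y => (hh.1 y).add (hk.1 y), fun x => (hh.2 x).add (hk.2 x)⟩

lemma IsBilin.sub {h k : V → V → ℝ} (hh : IsBilin h) (hk : IsBilin k) : IsBilin (h - k) :=
  ⟨fun y => (hh.1 y).sub (hk.1 y), fun x => (hh.2 x).sub (hk.2 x)⟩

lemma IsBilin.smul (a : ℝ) {h : V → V → ℝ} (hh : IsBilin h) : IsBilin (a • h) :=
  ⟨fun y => (hh.1 y).const_mul a, fun x => (hh.2 x).const_mul a⟩

lemma IsBilin.symB {h : V → V → ℝ} (hh : IsBilin h) : IsBilin (symB h) :=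
  ⟨fun y => ((hh.1 y).add (hh.2 y)).div_const 2, fun x => ((hh.2 x).add (hh.1 x)).div_const 2⟩

lemma IsBilin.lamB {h : V → V → ℝ} (hh : IsBilin h) : IsBilin (lamB h) :=
  ⟨fun y => ((hh.1 y).sub (hh.2 y)).div_const 2, fun x => ((hh.2 x).sub (hh.1 x)).div_const 2⟩

end Linearity

section Contraction

open scoped Matrix

noncomputable def ginvContract : (Fin n → Fin n → ℝ) →ₗ[ℝ] ℝ where
  toFun φ := ∑ i, ∑ j, ginv n b g i j * φ i j
  map_add' φ ψ := by simp only [Pi.add_apply, mul_add, Finset.sum_add_distrib]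
  map_smul' c φ := by
    simp only [Pi.smul_apply, smul_eq_mul, RingHom.id_apply, Finset.mul_sum]
    exact Finset.sum_congr rfl fun i _ => Finset.sum_congr rfl fun j _ => by ring

lemma ginvContract_apply (φ : Fin n → Fin n → ℝ) :
    ginvContract n b g φ = ∑ i, ∑ j, ginv n b g i j * φ i j := rfl

lemma det_gram_ne_zero (hgb : IsBilin g) (hgnd : ∀ x : V, (∀ y : V, g x y = 0) → x = 0) :
    (Matrix.of fun i j => g (b i) (b j)).det ≠ 0 := by
  let B : LinearMap.BilinForm ℝ V := LinearMap.mk₂ ℝ g (fun x x' y => (hgb.1 y).1 x x')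
    (fun c x y => (hgb.1 y).2 c x) (fun x y y' => (hgb.2 x).1 y y') (fun c x y => (hgb.2 x).2 c y)
  have hB : LinearMap.BilinForm.toMatrix b B = Matrix.of fun i j => g (b i) (b j) := by
    ext i j
    simp [B, LinearMap.BilinForm.toMatrix_apply]
  rw [← hB, ← Matrix.separatingLeft_iff_det_ne_zero,
    LinearMap.BilinForm.separatingLeft_toMatrix_iff]
  exact hgnd

lemma gram_mul_ginv (hgb : IsBilin g) (hgnd : ∀ x : V, (∀ y : V, g x y = 0) → x = 0) :
    (Matrix.of fun i j => g (b i) (b j)) * ginv n b g = 1 :=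
  Matrix.mul_nonsing_inv _ (isUnit_iff_ne_zero.mpr (det_gram_ne_zero n b g hgb hgnd))

lemma ginv_mul_gram (hgb : IsBilin g) (hgnd : ∀ x : V, (∀ y : V, g x y = 0) → x = 0) :
    ginv n b g * (Matrix.of fun i j => g (b i) (b j)) = 1 :=
  Matrix.nonsing_inv_mul _ (isUnit_iff_ne_zero.mpr (det_gram_ne_zero n b g hgb hgnd))

lemma ginv_symm (hgs : ∀ x y, g x y = g y x) (i j : Fin n) : ginv n b g i j = ginv n b g j i := by
  have hG : (Matrix.of fun i j => g (b i) (b j))ᵀ = Matrix.of fun i j => g (b i) (b j) := by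
    ext i j
    exact hgs _ _
  have := congrFun (congrFun
    (Matrix.transpose_nonsing_inv (Matrix.of fun i j => g (b i) (b j))) j) i
  rwa [hG] at this

lemma ginvContract_swap (hgs : ∀ x y, g x y = g y x) (φ : Fin n → Fin n → ℝ) :
    ginvContract n b g (fun i j => φ j i) = ginvContract n b g φ := by
  simp only [ginvContract_apply]
  rw [Finset.sum_comm]
  simp only [ginv_symm n b g hgs]

lemma ginvContract_eq_zero_of_antisymm (hgs : ∀ x y, g x y = g y x) {φ : Fin n → Fin n → ℝ}
    (hφ : ∀ i j, φ i j = -φ j i) : ginvContract n b g φ = 0 := by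
  have h := ginvContract_swap n b g hgs φ
  rw [show (fun i j => φ j i) = -φ from funext₂ fun i j => by simp [hφ j i], map_neg] at h
  linarith

lemma vecMul_ginv (hgb : IsBilin g) (hgnd : ∀ x : V, (∀ y : V, g x y = 0) → x = 0) (x : V) :
    (fun i => g x (b i)) ᵥ* ginv n b g = b.repr x := by
  have hx : (fun i => g x (b i)) = b.repr x ᵥ* Matrix.of fun i j => g (b i) (b j) := by
    funext i
    conv_lhs => rw [← b.sum_repr x]
    rw [(hgb.1 (b i)).map_sum_smul]
    rfl
  rw [hx, Matrix.vecMul_vecMul, gram_mul_ginv n b g hgb hgnd, Matrix.vecMul_one]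

lemma ginvContract_gram_mul (hgb : IsBilin g) (hgnd : ∀ x : V, (∀ y : V, g x y = 0) → x = 0)
    {f : V → ℝ} (hf : IsLin f) (x : V) :
    ginvContract n b g (fun i j => g x (b i) * f (b j)) = f x := by
  calc ginvContract n b g (fun i j => g x (b i) * f (b j))
      = ∑ j, ((fun i => g x (b i)) ᵥ* ginv n b g) j * f (b j) := by
        simp only [ginvContract_apply, Matrix.vecMul, dotProduct, Finset.sum_mul]
        rw [Finset.sum_comm]
        exact Finset.sum_congr rfl fun j _ => Finset.sum_congr rfl fun i _ => by ring
    _ = f x := by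
        rw [vecMul_ginv n b g hgb hgnd, ← hf.map_sum_smul, b.sum_repr]

lemma trg_self (hgb : IsBilin g) (hgs : ∀ x y, g x y = g y x)
    (hgnd : ∀ x : V, (∀ y : V, g x y = 0) → x = 0) : trg n b g g = n := by
  calc trg n b g g = (ginv n b g * Matrix.of fun i j => g (b i) (b j)).trace := by
        simp only [trg, Matrix.trace, Matrix.diag, Matrix.mul_apply, Matrix.of_apply,
          hgs (b _) (b _)]
    _ = n := by rw [ginv_mul_gram n b g hgb hgnd, Matrix.trace_one, Fintype.card_fin]

end Contraction

section Ricci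

lemma Ric_apply_eq (F : V → V → V → V → ℝ) (x y : V) :
    Ric n b g F x y = ginvContract n b g (fun i j => F (b i) x y (b j)) := rfl

lemma RicS_apply_eq (F : V → V → V → V → ℝ) (x y : V) :
    RicS n b g F x y = ginvContract n b g (fun i j => F x (b i) (b j) y) := rfl

lemma trg_eq (h : V → V → ℝ) : trg n b g h = ginvContract n b g (fun i j => h (b i) (b j)) := rfl

lemma Ric_add (T S : V → V → V → V → ℝ) : Ric n b g (T + S) = Ric n b g T + Ric n b g S :=
  funext₂ fun x y => map_add (ginvContract n b g) (fun i j => T (b i) x y (b j))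
    (fun i j => S (b i) x y (b j))

lemma Ric_sub (T S : V → V → V → V → ℝ) : Ric n b g (T - S) = Ric n b g T - Ric n b g S :=
  funext₂ fun x y => map_sub (ginvContract n b g) (fun i j => T (b i) x y (b j))
    (fun i j => S (b i) x y (b j))

lemma Ric_smul (c : ℝ) (T : V → V → V → V → ℝ) : Ric n b g (c • T) = c • Ric n b g T :=
  funext₂ fun x y => map_smul (ginvContract n b g) c (fun i j => T (b i) x y (b j))

lemma trg_add (h k : V → V → ℝ) : trg n b g (h + k) = trg n b g h + trg n b g k :=
  map_add (ginvContract n b g) (fun i j => h (b i) (b j)) (fun i j => k (b i) (b j))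

lemma trg_sub (h k : V → V → ℝ) : trg n b g (h - k) = trg n b g h - trg n b g k :=
  map_sub (ginvContract n b g) (fun i j => h (b i) (b j)) (fun i j => k (b i) (b j))

lemma trg_smul (c : ℝ) (h : V → V → ℝ) : trg n b g (c • h) = c * trg n b g h :=
  map_smul (ginvContract n b g) c (fun i j => h (b i) (b j))

lemma trg_zero : trg n b g 0 = 0 :=
  map_zero (ginvContract n b g)

lemma trg_symB (hgs : ∀ x y, g x y = g y x) (h : V → V → ℝ) :
    trg n b g (symB h) = trg n b g h := by
  have hsplit : (fun i j => symB h (b i) (b j))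
      = (1 / 2 : ℝ) • ((fun i j => h (b i) (b j)) + fun i j => h (b j) (b i)) := by
    funext i j
    simp only [symB, Pi.add_apply, Pi.smul_apply, smul_eq_mul]
    ring
  rw [trg_eq, trg_eq, hsplit, map_smul, map_add,
    ginvContract_swap n b g hgs (fun i j => h (b i) (b j)), smul_eq_mul]
  ring

lemma trg_lamB (hgs : ∀ x y, g x y = g y x) (h : V → V → ℝ) : trg n b g (lamB h) = 0 :=
  ginvContract_eq_zero_of_antisymm n b g hgs fun i j => by simp only [lamB]; ring

lemma trg_Ric (F : V → V → V → V → ℝ) : trg n b g (Ric n b g F) = tau n b g F := by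
  simp only [trg, Ric, tau, Finset.mul_sum]
  calc ∑ j, ∑ k, ∑ i, ∑ l, ginv n b g j k * (ginv n b g i l * F (b i) (b j) (b k) (b l))
      = ∑ j, ∑ i, ∑ k, ∑ l, ginv n b g j k * (ginv n b g i l * F (b i) (b j) (b k) (b l)) :=
        Finset.sum_congr rfl fun _ _ => Finset.sum_comm
    _ = _ := by
        rw [Finset.sum_comm]
        simp only [mul_left_comm, mul_assoc]

lemma trg_RicS (F : V → V → V → V → ℝ) : trg n b g (RicS n b g F) = tau n b g F := by
  simp only [trg, RicS, tau, Finset.mul_sum]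
  refine Finset.sum_congr rfl fun i _ => ?_
  calc ∑ l, ∑ j, ∑ k, ginv n b g i l * (ginv n b g j k * F (b i) (b j) (b k) (b l))
      = ∑ j, ∑ l, ∑ k, ginv n b g i l * (ginv n b g j k * F (b i) (b j) (b k) (b l)) :=
        Finset.sum_comm
    _ = _ := by
        refine Finset.sum_congr rfl fun j _ => ?_
        rw [Finset.sum_comm]
        simp only [mul_assoc]

lemma IsMulti4.isBilin_Ric {F : V → V → V → V → ℝ} (hF : IsMulti4 F) :
    IsBilin (Ric n b g F) :=
  ⟨fun y => isLin_sum _ fun i => isLin_sum _ fun j => (hF.2.1 (b i) y (b j)).const_mul _,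
    fun x => isLin_sum _ fun i => isLin_sum _ fun j => (hF.2.2.1 (b i) x (b j)).const_mul _⟩

lemma IsMulti4.isBilin_RicS {F : V → V → V → V → ℝ} (hF : IsMulti4 F) :
    IsBilin (RicS n b g F) :=
  ⟨fun y => isLin_sum _ fun i => isLin_sum _ fun j => (hF.1 (b i) (b j) y).const_mul _,
    fun x => isLin_sum _ fun i => isLin_sum _ fun j => (hF.2.2.2 x (b i) (b j)).const_mul _⟩

lemma ginvContract_mul_gram (hgb : IsBilin g) (hgs : ∀ x y, g x y = g y x)
    (hgnd : ∀ x : V, (∀ y : V, g x y = 0) → x = 0) {f : V → ℝ} (hf : IsLin f) (x : V) :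
    ginvContract n b g (fun i j => f (b i) * g x (b j)) = f x := by
  rw [← ginvContract_gram_mul n b g hgb hgnd hf x, ← ginvContract_swap n b g hgs]
  simp only [mul_comm]

lemma Ric_wedge (hgb : IsBilin g) (hgs : ∀ x y, g x y = g y x)
    (hgnd : ∀ x : V, (∀ y : V, g x y = 0) → x = 0) (t : ℝ) {h : V → V → ℝ} (hh : IsBilin h)
    (x y : V) :
    Ric n b g (wedge t h g) x y = (1 + t - n) * h x y - t * trg n b g h * g x y := by
  have hsplit : (fun i j => wedge t h g (b i) x y (b j))
      = (fun i j => h (b i) y * g x (b j)) - h x y • (fun i j => g (b i) (b j))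
        - (t * g x y) • (fun i j => h (b i) (b j)) + t • (fun i j => g y (b i) * h x (b j)) := by
    funext i j
    simp only [wedge, Pi.add_apply, Pi.sub_apply, Pi.smul_apply, smul_eq_mul]
    rw [hgs (b i) y]
    ring
  rw [Ric_apply_eq, hsplit, map_add, map_sub, map_sub, map_smul, map_smul, map_smul,
    ginvContract_mul_gram n b g hgb hgs hgnd (hh.1 y), ← trg_eq, ← trg_eq,
    trg_self n b g hgb hgs hgnd, ginvContract_gram_mul n b g hgb hgnd (hh.2 x), smul_eq_mul,
    smul_eq_mul, smul_eq_mul]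
  ring

lemma Ric_prodB (hgb : IsBilin g) (hgs : ∀ x y, g x y = g y x)
    (hgnd : ∀ x : V, (∀ y : V, g x y = 0) → x = 0) {h : V → V → ℝ} (hh : IsBilin h) (x y : V) :
    Ric n b g (prodB h g) x y = h y x :=
  ginvContract_mul_gram n b g hgb hgs hgnd (hh.1 x) y

lemma ginvContract_slot12 (hgs : ∀ x y, g x y = g y x) {F : V → V → V → V → ℝ}
    (hF : F ∈ rSet V) (x y : V) : ginvContract n b g (fun i j => F (b i) (b j) x y) = 0 :=
  ginvContract_eq_zero_of_antisymm n b g hgs fun _ _ => hF.2.1 _ _ _ _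

lemma ginvContract_slot13 (hgs : ∀ x y, g x y = g y x) {F : V → V → V → V → ℝ}
    (hF : F ∈ rSet V) (x y : V) :
    ginvContract n b g (fun i j => F (b i) x (b j) y) = -RicS n b g F x y := by
  have hsplit : (fun i j => F (b i) x (b j) y)
      = -(fun i j => F x (b j) (b i) y) - fun i j => F (b j) (b i) x y := by
    funext i j
    have := hF.2.2 (b i) x (b j) y
    simp only [Pi.neg_apply, Pi.sub_apply]
    linarith
  rw [hsplit, map_sub, map_neg, ginvContract_swap n b g hgs (fun i j => F x (b i) (b j) y),
    ginvContract_swap n b g hgs (fun i j => F (b i) (b j) x y), ginvContract_slot12 n b g hgs hF,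
    RicS_apply_eq, sub_zero]

lemma ginvContract_slot34 {F : V → V → V → V → ℝ} (hF : F ∈ rSet V) (x y : V) :
    ginvContract n b g (fun i j => F x y (b i) (b j)) = Ric n b g F y x - Ric n b g F x y := by
  have hsplit : (fun i j => F x y (b i) (b j))
      = (fun i j => F (b i) y x (b j)) - fun i j => F (b i) x y (b j) := by
    funext i j
    have := hF.2.2 x y (b i) (b j)
    have := hF.2.1 y (b i) x (b j)
    simp only [Pi.sub_apply]
    linarith
  rw [hsplit, map_sub, Ric_apply_eq, Ric_apply_eq]

lemma Ric_psi (hgs : ∀ x y, g x y = g y x) (F : V → V → V → V → ℝ) (x y : V) :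
    Ric n b g (psi F) x y
      = (Ric n b g F x y + Ric n b g F y x + RicS n b g F x y + RicS n b g F y x) / 4 := by
  have hsplit : (fun i j => psi F (b i) x y (b j))
      = (1 / 4 : ℝ) • ((fun i j => F (b i) x y (b j)) + (fun i j => F x (b i) (b j) y)
        + (fun i j => F y (b j) (b i) x) + fun i j => F (b j) y x (b i)) := by
    funext i j
    simp only [psi, Pi.add_apply, Pi.smul_apply, smul_eq_mul]
    ring
  rw [Ric_apply_eq, hsplit, map_smul, map_add, map_add, map_add,
    ginvContract_swap n b g hgs (fun i j => F y (b i) (b j) x),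
    ginvContract_swap n b g hgs (fun i j => F (b i) y x (b j))]
  simp only [Ric_apply_eq, RicS_apply_eq, smul_eq_mul]
  ring

lemma Ric_mu (hgs : ∀ x y, g x y = g y x) {F : V → V → V → V → ℝ} (hF : F ∈ rSet V) (x y : V) :
    Ric n b g (mu F) x y = (5 * Ric n b g F x y - Ric n b g F y x
      - 3 * RicS n b g F x y - RicS n b g F y x) / 8 := by
  have hsplit : (fun i j => mu F (b i) x y (b j))
      = (1 / 8 : ℝ) • ((3 : ℝ) • (fun i j => F (b i) x y (b j))
        + (3 : ℝ) • (fun i j => F (b i) x (b j) y) + (fun i j => F (b i) (b j) y x)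
        + (fun i j => F (b i) y (b j) x) + (fun i j => F (b j) x y (b i))
        + fun i j => F y x (b j) (b i)) := by
    funext i j
    simp only [mu, Pi.add_apply, Pi.smul_apply, smul_eq_mul]
    ring
  rw [Ric_apply_eq n b g (mu F), hsplit, map_smul, map_add, map_add, map_add, map_add, map_add,
    map_smul, map_smul, ginvContract_slot13 n b g hgs hF, ginvContract_slot12 n b g hgs hF,
    ginvContract_slot13 n b g hgs hF,
    ginvContract_swap n b g hgs (fun i j => F (b i) x y (b j)),
    ginvContract_swap n b g hgs (fun i j => F y x (b i) (b j)), ginvContract_slot34 n b g hF]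
  simp only [Ric_apply_eq, RicS_apply_eq, smul_eq_mul]
  ring

lemma Ric_pi1 (hgb : IsBilin g) (hgs : ∀ x y, g x y = g y x)
    (hgnd : ∀ x : V, (∀ y : V, g x y = 0) → x = 0) (hn : n ≠ 1) (F : V → V → V → V → ℝ) :
    Ric n b g (pi1 n b g F) = (tau n b g F / n) • g := by
  have hn1 : (n : ℝ) - 1 ≠ 0 := sub_ne_zero.mpr (by exact_mod_cast hn)
  funext x y
  simp only [pi1, Ric_smul, Pi.smul_apply, smul_eq_mul, Ric_wedge n b g hgb hgs hgnd 0 hgb]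
  field_simp
  ring

lemma Ric_pi2 (hgb : IsBilin g) (hgs : ∀ x y, g x y = g y x)
    (hgnd : ∀ x : V, (∀ y : V, g x y = 0) → x = 0) (hn : n ≠ 1) {F : V → V → V → V → ℝ}
    (hF : IsMulti4 F) :
    Ric n b g (pi2 n b g F) = (-tau n b g F / n) • g + symB (Ric n b g F) := by
  have hn1 : (n : ℝ) - 1 ≠ 0 := sub_ne_zero.mpr (by exact_mod_cast hn)
  have hh := (hgb.smul (tau n b g F / n)).sub (hF.isBilin_Ric n b g).symB
  funext x y
  simp only [pi2, Ric_smul, Pi.smul_apply, Pi.add_apply, smul_eq_mul,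
    Ric_wedge n b g hgb hgs hgnd 0 hh, Pi.sub_apply]
  field_simp
  ring

lemma Ric_pi3 (hgb : IsBilin g) (hgs : ∀ x y, g x y = g y x)
    (hgnd : ∀ x : V, (∀ y : V, g x y = 0) → x = 0) {F : V → V → V → V → ℝ} (hF : IsMulti4 F) :
    Ric n b g (pi3 n b g F) = lamB (Ric n b g F) := by
  have hh := (hF.isBilin_Ric n b g).lamB
  have hn1 : (n : ℝ) + 1 ≠ 0 := by positivity
  funext x y
  simp only [pi3, Ric_smul, Ric_add, Pi.smul_apply, Pi.add_apply, smul_eq_mul,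
    Ric_wedge n b g hgb hgs hgnd 0 hh, Ric_prodB n b g hgb hgs hgnd hh]
  simp only [lamB]
  field_simp
  ring

lemma Ric_pi4 (hgb : IsBilin g) (hgs : ∀ x y, g x y = g y x)
    (hgnd : ∀ x : V, (∀ y : V, g x y = 0) → x = 0) {F : V → V → V → V → ℝ} (hF : IsMulti4 F) :
    Ric n b g (pi4 n b g F) = 0 := by
  have hh := (hF.isBilin_Ric n b g).lamB
  have hhS := (hF.isBilin_RicS n b g).lamB
  funext x y
  simp only [pi4, Ric_smul, Ric_add, Ric_sub, Pi.smul_apply, Pi.add_apply, Pi.sub_apply,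
    smul_eq_mul, Pi.zero_apply, Ric_wedge n b g hgb hgs hgnd _ hh, Ric_prodB n b g hgb hgs hgnd hh,
    Ric_wedge n b g hgb hgs hgnd _ hhS, Ric_prodB n b g hgb hgs hgnd hhS, trg_lamB n b g hgs]
  simp only [lamB]
  ring

lemma Ric_pi5 (hgb : IsBilin g) (hgs : ∀ x y, g x y = g y x)
    (hgnd : ∀ x : V, (∀ y : V, g x y = 0) → x = 0) (hn : n ≠ 0) {F : V → V → V → V → ℝ}
    (hF : IsMulti4 F) : Ric n b g (pi5 n b g F) = 0 := by
  have hn0 : (n : ℝ) ≠ 0 := by exact_mod_cast hn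
  have hh := ((hF.isBilin_Ric n b g).add ((hF.isBilin_RicS n b g).smul ((n : ℝ) - 1))).symB
  funext x y
  simp only [pi5, Ric_smul, Ric_sub, Pi.smul_apply, Pi.sub_apply, smul_eq_mul, Pi.zero_apply,
    Ric_wedge n b g hgb hgs hgnd _ hh, Ric_wedge n b g hgb hgs hgnd _ hgb,
    trg_self n b g hgb hgs hgnd, trg_symB n b g hgs, trg_add, trg_smul, trg_Ric, trg_RicS]
  field_simp
  ring

lemma Ric_pi6 (hgb : IsBilin g) (hgs : ∀ x y, g x y = g y x)
    (hgnd : ∀ x : V, (∀ y : V, g x y = 0) → x = 0) (hn1 : n ≠ 1) (hn2 : n ≠ 2)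
    {F : V → V → V → V → ℝ} (hF : IsMulti4 F) : Ric n b g (pi6 n b g F) = 0 := by
  have hn1' : (n : ℝ) - 1 ≠ 0 := sub_ne_zero.mpr (by exact_mod_cast hn1)
  have hn2' : (n : ℝ) - 2 ≠ 0 := sub_ne_zero.mpr (by exact_mod_cast hn2)
  have hh := ((hF.isBilin_Ric n b g).add (hF.isBilin_RicS n b g)).symB
  funext x y
  simp only [pi6, Ric_smul, Ric_add, Ric_sub, Pi.smul_apply, Pi.add_apply, Pi.sub_apply,
    smul_eq_mul, Pi.zero_apply, Ric_psi n b g hgs, Ric_wedge n b g hgb hgs hgnd _ hh,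
    Ric_wedge n b g hgb hgs hgnd _ hgb, trg_symB n b g hgs, trg_add, trg_Ric, trg_RicS]
  simp only [symB, Pi.add_apply]
  field_simp
  ring

lemma Ric_pi7 (hgb : IsBilin g) (hgs : ∀ x y, g x y = g y x)
    (hgnd : ∀ x : V, (∀ y : V, g x y = 0) → x = 0) (hn : n ≠ 0) {F : V → V → V → V → ℝ}
    (hF : F ∈ rSet V) : Ric n b g (pi7 n b g F) = 0 := by
  have hn0 : (n : ℝ) ≠ 0 := by exact_mod_cast hn
  have hn2 : (n : ℝ) + 2 ≠ 0 := by positivity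
  have hS := ((hF.1.isBilin_Ric n b g).sub (hF.1.isBilin_RicS n b g)).symB
  have hL := (((hF.1.isBilin_Ric n b g).smul 3).sub (hF.1.isBilin_RicS n b g)).lamB
  funext x y
  simp only [pi7, Ric_smul, Ric_add, Pi.smul_apply, Pi.add_apply, smul_eq_mul, Pi.zero_apply,
    Ric_mu n b g hgs hF, Ric_wedge n b g hgb hgs hgnd _ hS, Ric_wedge n b g hgb hgs hgnd _ hL,
    Ric_prodB n b g hgb hgs hgnd hL, trg_symB n b g hgs, trg_sub, trg_Ric, trg_RicS,
    trg_lamB n b g hgs]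
  simp only [symB, lamB, Pi.sub_apply, Pi.smul_apply, smul_eq_mul]
  field_simp
  ring

lemma Ric_pi8 (hgb : IsBilin g) (hgs : ∀ x y, g x y = g y x)
    (hgnd : ∀ x : V, (∀ y : V, g x y = 0) → x = 0) (hn : n ≠ 2) {F : V → V → V → V → ℝ}
    (hF : F ∈ rSet V) : Ric n b g (pi8 n b g F) = 0 := by
  have hn2 : (n : ℝ) - 2 ≠ 0 := sub_ne_zero.mpr (by exact_mod_cast hn)
  have hL := ((hF.1.isBilin_Ric n b g).add (hF.1.isBilin_RicS n b g)).lamB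
  funext x y
  simp only [pi8, Ric_smul, Ric_add, Ric_sub, Pi.smul_apply, Pi.add_apply, Pi.sub_apply,
    smul_eq_mul, Pi.zero_apply, Ric_psi n b g hgs, Ric_mu n b g hgs hF,
    Ric_wedge n b g hgb hgs hgnd _ hL, Ric_prodB n b g hgb hgs hgnd hL, trg_lamB n b g hgs]
  simp only [lamB, Pi.add_apply]
  field_simp
  ring

end Ricci

theorem stmt7 {V : Type*} [AddCommGroup V] [Module ℝ V]
    (n : ℕ) (hn : 3 ≤ n) (b : Module.Basis (Fin n) ℝ V)
    (g : V → V → ℝ) (hgb : IsBilin g) (hgs : ∀ x y, g x y = g y x)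
    (hgnd : ∀ x : V, (∀ y : V, g x y = 0) → x = 0) :
    ∀ F ∈ rSet V,
      Ric n b g (pi1 n b g F) = ((tau n b g F) / (n : ℝ)) • g ∧
      Ric n b g (pi2 n b g F) = (-(tau n b g F) / (n : ℝ)) • g + symB (Ric n b g F) ∧
      Ric n b g (pi3 n b g F) = lamB (Ric n b g F) ∧
      Ric n b g (pi4 n b g F) = 0 ∧ Ric n b g (pi5 n b g F) = 0 ∧
      Ric n b g (pi6 n b g F) = 0 ∧ Ric n b g (pi7 n b g F) = 0 ∧
      Ric n b g (pi8 n b g F) = 0 ∧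
      trg n b g (Ric n b g (pi2 n b g F)) = 0 ∧ trg n b g (Ric n b g (pi3 n b g F)) = 0 ∧
      trg n b g (Ric n b g (pi4 n b g F)) = 0 ∧ trg n b g (Ric n b g (pi5 n b g F)) = 0 ∧
      trg n b g (Ric n b g (pi6 n b g F)) = 0 ∧ trg n b g (Ric n b g (pi7 n b g F)) = 0 ∧
      trg n b g (Ric n b g (pi8 n b g F)) = 0 := by
  intro F hF
  have h2 := Ric_pi2 n b g hgb hgs hgnd (by omega) hF.1
  have h3 := Ric_pi3 n b g hgb hgs hgnd hF.1
  have h4 := Ric_pi4 n b g hgb hgs hgnd hF.1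
  have h5 := Ric_pi5 n b g hgb hgs hgnd (by omega) hF.1
  have h6 := Ric_pi6 n b g hgb hgs hgnd (by omega) (by omega) hF.1
  have h7 := Ric_pi7 n b g hgb hgs hgnd (by omega) hF
  have h8 := Ric_pi8 n b g hgb hgs hgnd (by omega) hF
  refine ⟨Ric_pi1 n b g hgb hgs hgnd (by omega) F, h2, h3, h4, h5, h6, h7, h8, ?_, ?_, ?_⟩
  · have hn0 : (n : ℝ) ≠ 0 := Nat.cast_ne_zero.mpr (by omega)
    rw [h2, trg_add, trg_smul, trg_self n b g hgb hgs hgnd, trg_symB n b g hgs, trg_Ric]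
    field_simp
    ring
  · rw [h3, trg_lamB n b g hgs]
  · simp only [h4, h5, h6, h7, h8, trg_zero, and_self]

end GCT
end
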